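/- arXiv:2405.10123 — 5 statements merged into one kernel-verified Lean document; each statement's English description precedes it below -/
import Mathlib

section
/- Let f : ℝ^n → ℝ be μ-strongly convex with L-Lipschitz gradient, and let α < 2/(μ+L). Then for all x, y ∈ ℝ^n, ‖x - α∇f(x) - (y - α∇f(y))‖² ≤ (1 - αγ)‖x - y‖², where γ = 2μL/(μ+L). -/
open scoped RealInnerProductSpace

/-!
Put `d = x - y` and `g = ∇f x - ∇f y`. Since `‖d - α g‖² = ‖d‖² - 2α⟪g, d⟫ + α²‖g‖²`, the claim
follows, for `α (μ + L) ≤ 2`, from Nesterov's coercivity inequality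
`‖g‖² + μL‖d‖² ≤ (μ + L)⟪g, d⟫`. If `μ < L`, this is the cocoercivity of the gradient of
`φ = f - μ/2 ‖·‖²`, whose Bregman divergence lies between `0` and `(L - μ)/2 ‖y - x‖²`;
if `L ≤ μ`, it follows from strong monotonicity of `∇f` and the Lipschitz bound.
-/

section

variable {E : Type*} [NormedAddCommGroup E] [InnerProductSpace ℝ E]

def bregman (f : E → ℝ) (f' : E → E) (x y : E) : ℝ :=
  f y - f x - ⟪f' x, y - x⟫

theorem bregman_add_bregman_swap (f : E → ℝ) (f' : E → E) (x y : E) :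
    bregman f f' x y + bregman f f' y x = ⟪f' x - f' y, x - y⟫ := by
  rw [bregman, bregman, ← neg_sub x y, inner_neg_right, inner_sub_left]
  ring

theorem bregman_three_point (f : E → ℝ) (f' : E → E) (x y z : E) :
    bregman f f' x z = bregman f f' x y + bregman f f' y z + ⟪f' y - f' x, z - y⟫ := by
  have hsplit : z - x = (y - x) + (z - y) := by abel
  simp only [bregman, hsplit, inner_add_right, inner_sub_left]
  ring

theorem bregman_sub_half_sq_norm (f : E → ℝ) (f' : E → E) (μ : ℝ) (x y : E) :
    bregman (fun z => f z - μ / 2 * ‖z‖ ^ 2) (fun z => f' z - μ • z) x y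
      = bregman f f' x y - μ / 2 * ‖y - x‖ ^ 2 := by
  simp only [bregman, inner_sub_left, real_inner_smul_left, inner_sub_right,
    real_inner_self_eq_norm_sq, norm_sub_sq_real, real_inner_comm x y]
  ring

theorem hasDerivAt_comp_add_smul [CompleteSpace E] {f : E → ℝ} {g x d : E} {t : ℝ}
    (hf : HasGradientAt f g (x + t • d)) :
    HasDerivAt (fun s : ℝ => f (x + s • d)) ⟪g, d⟫ t := by
  have hline : HasDerivAt (fun s : ℝ => x + s • d) d t := by
    simpa using ((hasDerivAt_id t).smul_const d).const_add x
  have hcomp := hf.hasFDerivAt.comp_hasDerivAt t hline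
  simp only [InnerProductSpace.toDual_apply_apply] at hcomp
  exact hcomp

theorem bregman_le_of_lipschitz_gradient [CompleteSpace E] {f : E → ℝ} {f' : E → E} {L : ℝ}
    (hgrad : ∀ x, HasGradientAt f (f' x) x) (hlip : ∀ x y, ‖f' x - f' y‖ ≤ L * ‖x - y‖)
    (x y : E) : bregman f f' x y ≤ L / 2 * ‖y - x‖ ^ 2 := by
  set d := y - x
  set g : ℝ → ℝ := fun t => f (x + t • d) - t * ⟪f' x, d⟫ - L / 2 * t ^ 2 * ‖d‖ ^ 2
  have hderiv : ∀ t, HasDerivAt g (⟪f' (x + t • d) - f' x, d⟫ - L * t * ‖d‖ ^ 2) t := by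
    intro t
    have hquad : HasDerivAt (fun s : ℝ => L / 2 * s ^ 2 * ‖d‖ ^ 2) (L * t * ‖d‖ ^ 2) t := by
      refine (((hasDerivAt_pow 2 t).const_mul (L / 2)).mul_const (‖d‖ ^ 2)).congr_deriv ?_
      ring
    refine (((hasDerivAt_comp_add_smul (hgrad _)).sub
      ((hasDerivAt_id t).mul_const ⟪f' x, d⟫)).sub hquad).congr_deriv ?_
    rw [inner_sub_left, one_mul]
  have hderiv_nonpos : ∀ t ∈ interior (Set.Ici (0 : ℝ)),
      ⟪f' (x + t • d) - f' x, d⟫ - L * t * ‖d‖ ^ 2 ≤ 0 := by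
    intro t ht
    rw [interior_Ici, Set.mem_Ioi] at ht
    have hstep : ‖f' (x + t • d) - f' x‖ ≤ L * (t * ‖d‖) := by
      simpa [norm_smul, abs_of_pos ht] using hlip (x + t • d) x
    rw [sub_nonpos]
    calc ⟪f' (x + t • d) - f' x, d⟫ ≤ ‖f' (x + t • d) - f' x‖ * ‖d‖ := real_inner_le_norm _ _
      _ ≤ L * (t * ‖d‖) * ‖d‖ := mul_le_mul_of_nonneg_right hstep (norm_nonneg d)
      _ = L * t * ‖d‖ ^ 2 := by ring
  have hanti : AntitoneOn g (Set.Ici 0) :=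
    antitoneOn_of_hasDerivWithinAt_nonpos (convex_Ici 0)
      (fun t _ => (hderiv t).continuousAt.continuousWithinAt)
      (fun t _ => (hderiv t).hasDerivWithinAt) hderiv_nonpos
  have hg : g 1 ≤ g 0 := hanti Set.self_mem_Ici (Set.mem_Ici.2 zero_le_one) zero_le_one
  simp only [g, d, one_smul, add_sub_cancel, zero_smul, add_zero] at hg
  rw [bregman]
  linarith

theorem norm_sub_sq_div_le_bregman {φ : E → ℝ} {φ' : E → E} {C : ℝ} (hC : 0 < C)
    (hconv : ∀ x y, 0 ≤ bregman φ φ' x y) (hsmooth : ∀ x y, bregman φ φ' x y ≤ C / 2 * ‖y - x‖ ^ 2)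
    (x y : E) : ‖φ' y - φ' x‖ ^ 2 / (2 * C) ≤ bregman φ φ' x y := by
  set g := φ' y - φ' x
  -- the minimiser of the quadratic upper bound of `φ - ⟪φ' x, ·⟫` around `y`
  set z := y - C⁻¹ • g
  have hzy : z - y = -(C⁻¹ • g) := by simp [z]
  have hthree := bregman_three_point φ φ' x y z
  have hxz := hconv x z
  have hyz := hsmooth y z
  rw [hzy, inner_neg_right, real_inner_smul_right, real_inner_self_eq_norm_sq] at hthree
  rw [hzy, norm_neg, norm_smul, mul_pow, Real.norm_eq_abs, sq_abs] at hyz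
  have hC' : C ≠ 0 := hC.ne'
  have hsq : C / 2 * (C⁻¹ ^ 2 * ‖g‖ ^ 2) = C⁻¹ * ‖g‖ ^ 2 - ‖g‖ ^ 2 / (2 * C) := by
    field_simp
    ring
  linarith

theorem cocoercive_of_bregman_bounds {φ : E → ℝ} {φ' : E → E} {C : ℝ} (hC : 0 < C)
    (hconv : ∀ x y, 0 ≤ bregman φ φ' x y) (hsmooth : ∀ x y, bregman φ φ' x y ≤ C / 2 * ‖y - x‖ ^ 2)
    (x y : E) : ‖φ' x - φ' y‖ ^ 2 ≤ C * ⟪φ' x - φ' y, x - y⟫ := by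
  have hxy := norm_sub_sq_div_le_bregman hC hconv hsmooth x y
  have hyx := norm_sub_sq_div_le_bregman hC hconv hsmooth y x
  rw [norm_sub_rev] at hxy
  have hhalves : ‖φ' x - φ' y‖ ^ 2 / C
      = ‖φ' x - φ' y‖ ^ 2 / (2 * C) + ‖φ' x - φ' y‖ ^ 2 / (2 * C) := by
    field_simp
    ring
  rw [← div_le_iff₀' hC, ← bregman_add_bregman_swap φ]
  linarith

theorem strongly_monotone_of_bregman_ge {f : E → ℝ} {f' : E → E} {μ : ℝ}
    (hsc : ∀ x y, μ / 2 * ‖y - x‖ ^ 2 ≤ bregman f f' x y) (x y : E) :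
    μ * ‖x - y‖ ^ 2 ≤ ⟪f' x - f' y, x - y⟫ := by
  have hxy := hsc x y
  rw [norm_sub_rev] at hxy
  linarith [hsc y x, bregman_add_bregman_swap f f' x y]

theorem norm_sub_sq_add_mul_le_inner_of_strongly_convex [CompleteSpace E] {f : E → ℝ}
    {f' : E → E} {μ L : ℝ} (hL : 0 ≤ L) (hgrad : ∀ x, HasGradientAt f (f' x) x)
    (hsc : ∀ x y, μ / 2 * ‖y - x‖ ^ 2 ≤ bregman f f' x y)
    (hlip : ∀ x y, ‖f' x - f' y‖ ≤ L * ‖x - y‖) (x y : E) :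
    ‖f' x - f' y‖ ^ 2 + μ * L * ‖x - y‖ ^ 2 ≤ (μ + L) * ⟪f' x - f' y, x - y⟫ := by
  have hmono := strongly_monotone_of_bregman_ge hsc x y
  rcases le_or_gt L μ with hLμ | hμL
  · have hsq : ‖f' x - f' y‖ ^ 2 ≤ (μ * ‖x - y‖) ^ 2 := pow_le_pow_left₀ (norm_nonneg _)
      ((hlip x y).trans (mul_le_mul_of_nonneg_right hLμ (norm_nonneg _))) 2
    nlinarith [mul_le_mul_of_nonneg_left hmono (by linarith : 0 ≤ μ + L)]
  · have hconv : ∀ a b, 0 ≤ bregman (fun z => f z - μ / 2 * ‖z‖ ^ 2) (fun z => f' z - μ • z) a b :=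
      fun a b => by linarith [bregman_sub_half_sq_norm f f' μ a b, hsc a b]
    have hsmooth : ∀ a b, bregman (fun z => f z - μ / 2 * ‖z‖ ^ 2) (fun z => f' z - μ • z) a b
        ≤ (L - μ) / 2 * ‖b - a‖ ^ 2 :=
      fun a b => by linarith [bregman_sub_half_sq_norm f f' μ a b,
        bregman_le_of_lipschitz_gradient hgrad hlip a b]
    have hco := cocoercive_of_bregman_bounds (sub_pos.2 hμL) hconv hsmooth x y
    have hshift : f' x - μ • x - (f' y - μ • y) = (f' x - f' y) - μ • (x - y) := by
      rw [smul_sub]; abel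
    have hnorm : ‖(f' x - f' y) - μ • (x - y)‖ ^ 2
        = ‖f' x - f' y‖ ^ 2 - 2 * (μ * ⟪f' x - f' y, x - y⟫) + μ ^ 2 * ‖x - y‖ ^ 2 := by
      rw [norm_sub_sq_real, real_inner_smul_right, norm_smul, mul_pow, Real.norm_eq_abs, sq_abs]
    have hinner : ⟪(f' x - f' y) - μ • (x - y), x - y⟫
        = ⟪f' x - f' y, x - y⟫ - μ * ‖x - y‖ ^ 2 := by
      rw [inner_sub_left, real_inner_smul_left, real_inner_self_eq_norm_sq]
    rw [hshift, hnorm, hinner] at hco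
    linarith

theorem norm_sub_smul_sq_le_of_coercive {μ L α : ℝ} (hα : 0 < α) (hα2 : α ≤ 2 / (μ + L))
    {d g : E} (hco : ‖g‖ ^ 2 + μ * L * ‖d‖ ^ 2 ≤ (μ + L) * ⟪g, d⟫) :
    ‖d - α • g‖ ^ 2 ≤ (1 - α * (2 * μ * L / (μ + L))) * ‖d‖ ^ 2 := by
  have hμL : 0 < μ + L := (div_pos_iff_of_pos_left two_pos).1 (hα.trans_le hα2)
  have hstep : α * (μ + L) ≤ 2 := (le_div_iff₀ hμL).1 hα2
  rw [norm_sub_sq_real, real_inner_smul_right, norm_smul, mul_pow, Real.norm_eq_abs, sq_abs,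
    real_inner_comm]
  have hrate : α * (2 * μ * L / (μ + L)) * (μ + L) = 2 * α * (μ * L) := by
    field_simp
  nlinarith [mul_le_mul_of_nonneg_left hstep (mul_nonneg hα.le (sq_nonneg ‖g‖))]

end

theorem gradient_step_contraction_general {n : ℕ}
    (f : EuclideanSpace ℝ (Fin n) → ℝ) (f' : EuclideanSpace ℝ (Fin n) → EuclideanSpace ℝ (Fin n))
    (μ L α : ℝ) (hL : 0 < L)
    (hgrad : ∀ x, HasGradientAt f (f' x) x)
    (hsc : ∀ x y, f y ≥ f x + ⟪f' x, y - x⟫ + μ / 2 * ‖y - x‖ ^ 2)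
    (hlip : ∀ x y, ‖f' x - f' y‖ ≤ L * ‖x - y‖)
    (hα : 0 < α) (hα2 : α < 2 / (μ + L))
    (x y : EuclideanSpace ℝ (Fin n)) :
    ‖x - α • f' x - (y - α • f' y)‖ ^ 2 ≤ (1 - α * (2 * μ * L / (μ + L))) * ‖x - y‖ ^ 2 := by
  have hbregman : ∀ x y, μ / 2 * ‖y - x‖ ^ 2 ≤ bregman f f' x y := fun x y => by
    rw [bregman]; linarith [hsc x y]
  have hstep : x - α • f' x - (y - α • f' y) = (x - y) - α • (f' x - f' y) := by
    rw [smul_sub]; abel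
  rw [hstep]
  exact norm_sub_smul_sq_le_of_coercive hα hα2.le
    (norm_sub_sq_add_mul_le_inner_of_strongly_convex hL.le hgrad hbregman hlip x y)

/-- Contraction property of a gradient step for a strongly convex function with
Lipschitz gradient (Nesterov). -/
theorem gradient_step_contraction {n : ℕ}
    (f : EuclideanSpace ℝ (Fin n) → ℝ) (f' : EuclideanSpace ℝ (Fin n) → EuclideanSpace ℝ (Fin n))
    (μ L α : ℝ) (hμ : 0 < μ) (hL : 0 < L)
    (hgrad : ∀ x, HasGradientAt f (f' x) x)
    (hsc : ∀ x y, f y ≥ f x + ⟪f' x, y - x⟫ + μ / 2 * ‖y - x‖ ^ 2)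
    (hlip : ∀ x y, ‖f' x - f' y‖ ≤ L * ‖x - y‖)
    (hα : 0 < α) (hα2 : α < 2 / (μ + L))
    (x y : EuclideanSpace ℝ (Fin n)) :
    ‖x - α • f' x - (y - α • f' y)‖ ^ 2 ≤ (1 - α * (2 * μ * L / (μ + L))) * ‖x - y‖ ^ 2 :=
  gradient_step_contraction_general f f' μ L α hL hgrad hsc hlip hα hα2 x y
end

section
/- Let n ≥ 1, p_1,…,p_n ∈ (0,1], p_s ∈ (0,1], β ∈ (0,1], and set p_min = min{min_i p_i, p_s} and ρ = 1 - p_min + p_min·β^{1/3}. For each i ∈ [n], define w_i = (1/n)β^{-2/3}/p_i, w_{n+i} = (1/n)β^{-1/3}/p_i, and w_{2n+1} = 1/p_s. Then for each i ∈ [n], (1/n)((1-p_i)/(p_i β^{2/3}) + 1/β^{1/3}) ≤ ρ·w_i and (1/n)((1-p_i)/(p_i β^{1/3}) + 1) ≤ ρ·w_{n+i}, and moreover β^{1/3} + (1-p_s)/p_s ≤ ρ·w_{2n+1}. -/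
open Finset

/-- The key spectral estimate: the left vector w satisfies wᵀA ≤ ρ wᵀ componentwise. -/
theorem area_spectral_estimate (n : ℕ) (hn : 1 ≤ n) (p : Fin n → ℝ)
    (hp : ∀ i, 0 < p i) (hp1 : ∀ i, p i ≤ 1)
    (ps : ℝ) (hps : 0 < ps) (hps1 : ps ≤ 1)
    (β : ℝ) (hβ0 : 0 < β) (hβ1 : β ≤ 1)
    (pmin ρ : ℝ)
    (hpmin : pmin = min (⨅ i, p i) ps)
    (hρ : ρ = 1 - pmin + pmin * β ^ ((1 : ℝ) / 3)) :
    (∀ i, (1 / (n : ℝ)) * ((1 - p i) / (p i * β ^ ((2 : ℝ) / 3)) + 1 / β ^ ((1 : ℝ) / 3))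
        ≤ ρ * ((1 / (n : ℝ)) * β ^ (-(2 : ℝ) / 3) / p i)) ∧
    (∀ i, (1 / (n : ℝ)) * ((1 - p i) / (p i * β ^ ((1 : ℝ) / 3)) + 1)
        ≤ ρ * ((1 / (n : ℝ)) * β ^ (-(1 : ℝ) / 3) / p i)) ∧
    (β ^ ((1 : ℝ) / 3) + (1 - ps) / ps ≤ ρ * (1 / ps)) := by
  haveI : Nonempty (Fin n) := Fin.pos_iff_nonempty.mp hn
  set b1 : ℝ := β ^ ((1 : ℝ) / 3) with hb1def
  have hb1 : 0 < b1 := Real.rpow_pos_of_pos hβ0 _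
  have hb1le : b1 ≤ 1 := Real.rpow_le_one (le_of_lt hβ0) hβ1 (by norm_num)
  have hb2 : β ^ ((2 : ℝ) / 3) = b1 ^ 2 := by
    rw [hb1def, ← Real.rpow_natCast (β ^ ((1:ℝ)/3)) 2, ← Real.rpow_mul (le_of_lt hβ0)]
    norm_num
  have hb2inv : β ^ (-(2 : ℝ) / 3) = (b1 ^ 2)⁻¹ := by
    rw [← hb2, show (-(2:ℝ)/3) = -((2:ℝ)/3) by ring, Real.rpow_neg (le_of_lt hβ0)]
  have hb1inv : β ^ (-(1 : ℝ) / 3) = b1⁻¹ := by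
    rw [hb1def, show (-(1:ℝ)/3) = -((1:ℝ)/3) by ring, Real.rpow_neg (le_of_lt hβ0)]
  have hN : (0 : ℝ) < (n : ℝ) := by exact_mod_cast hn
  -- key scalar inequality
  have key : ∀ q : ℝ, pmin ≤ q → 1 - q + q * b1 ≤ ρ := by
    intro q hq
    rw [hρ]
    nlinarith [mul_nonneg (sub_nonneg.mpr hq) (sub_nonneg.mpr hb1le)]
  have hpminp : ∀ i, pmin ≤ p i := by
    intro i
    rw [hpmin]
    exact le_trans (min_le_left _ _)
      (ciInf_le (Set.Finite.bddBelow (Set.finite_range p)) i)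
  have hpminps : pmin ≤ ps := hpmin ▸ min_le_right _ _
  refine ⟨?_, ?_, ?_⟩
  · intro i
    have hpi := hp i
    have h1 : (1 / (n : ℝ)) * ((1 - p i) / (p i * β ^ ((2 : ℝ) / 3)) + 1 / b1)
        = (1 - p i + p i * b1) / ((n : ℝ) * p i * b1 ^ 2) := by
      rw [hb2]; field_simp
    have h2 : ρ * ((1 / (n : ℝ)) * β ^ (-(2 : ℝ) / 3) / p i)
        = ρ / ((n : ℝ) * p i * b1 ^ 2) := by
      rw [hb2inv, eq_div_iff (ne_of_gt (by positivity : (0:ℝ) < (n : ℝ) * p i * b1 ^ 2))]; field_simp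
    rw [h1, h2]
    exact (div_le_div_iff_of_pos_right (by positivity)).mpr (key _ (hpminp i))
  · intro i
    have hpi := hp i
    have h1 : (1 / (n : ℝ)) * ((1 - p i) / (p i * b1) + 1)
        = (1 - p i + p i * b1) / ((n : ℝ) * p i * b1) := by
      rw [eq_div_iff (ne_of_gt (by positivity : (0:ℝ) < (n : ℝ) * p i * b1))]; field_simp
    have h2 : ρ * ((1 / (n : ℝ)) * β ^ (-(1 : ℝ) / 3) / p i)
        = ρ / ((n : ℝ) * p i * b1) := by
      rw [hb1inv, eq_div_iff (ne_of_gt (by positivity : (0:ℝ) < (n : ℝ) * p i * b1))]; field_simp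
    rw [h1, h2]
    exact (div_le_div_iff_of_pos_right (by positivity)).mpr (key _ (hpminp i))
  · have h1 : b1 + (1 - ps) / ps = (1 - ps + ps * b1) / ps := by
      field_simp; ring
    have h2 : ρ * (1 / ps) = ρ / ps := by ring
    rw [h1, h2]
    exact (div_le_div_iff_of_pos_right hps).mpr (key _ hpminps)
end

section
/- Let p ∈ (0,1), d ≥ 24/p, and for k ≥ 0 set β_k = 1 - 12/(p(k+d)). Then (1 - p + p·β_k^{1/3})·(k+d)^4 ≤ (k+d-1)^4. -/
/-- Monotonicity of the weighted recursion with weight (k+d)^4. -/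
theorem weighted_contraction (p d : ℝ) (hp0 : 0 < p) (hp1 : p < 1) (hd : 24 / p ≤ d) :
    ∀ k : ℕ,
      (1 - p + p * (1 - 12 / (p * ((k : ℝ) + d))) ^ ((1 : ℝ) / 3)) * ((k : ℝ) + d) ^ 4
        ≤ ((k : ℝ) + d - 1) ^ 4 := by
  intro k
  set x : ℝ := (k : ℝ) + d with hxdef
  have hdx : d ≤ x := by
    have : (0:ℝ) ≤ (k:ℝ) := Nat.cast_nonneg k
    simp only [hxdef]; linarith
  have hx24 : 24 ≤ p * x := by
    have h1 : p * (24 / p) = 24 := by field_simp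
    have h2 : p * (24 / p) ≤ p * x :=
      mul_le_mul_of_nonneg_left (le_trans hd hdx) hp0.le
    calc (24:ℝ) = p * (24 / p) := h1.symm
      _ ≤ p * x := h2
  have hpx0 : (0:ℝ) < p * x := by linarith
  have hx0 : (0:ℝ) < x := by nlinarith
  have hu0 : (0:ℝ) < 1 / (p * x) := by positivity
  have hu1 : 1 / (p * x) ≤ 1 / 24 := by
    apply one_div_le_one_div_of_le <;> linarith
  set u : ℝ := 1 / (p * x) with hudef
  have hβ : (1:ℝ) - 12 / (p * x) = 1 - 12 * u := by rw [hudef]; ring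
  have hβ0 : (0:ℝ) ≤ 1 - 12 * u := by linarith
  set y : ℝ := 1 - 4 * u with hydef
  have hy0 : (0:ℝ) ≤ y := by rw [hydef]; linarith
  have hkey : 1 - 12 * u ≤ y ^ (3:ℕ) := by
    rw [hydef]
    nlinarith [sq_nonneg u, hu0.le]
  have hcube : ((1:ℝ) - 12 / (p * x)) ^ ((1:ℝ)/3) ≤ y := by
    rw [hβ]
    calc (1 - 12 * u) ^ ((1:ℝ)/3) ≤ ((y:ℝ) ^ (3:ℕ)) ^ ((1:ℝ)/3) :=
          Real.rpow_le_rpow hβ0 hkey (by norm_num)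
      _ = y := by
          rw [← Real.rpow_natCast y 3, ← Real.rpow_mul hy0]
          norm_num
  have h1 : 1 - p + p * ((1:ℝ) - 12 / (p * x)) ^ ((1:ℝ)/3) ≤ 1 - 4 / x := by
    have h2 : p * ((1:ℝ) - 12 / (p * x)) ^ ((1:ℝ)/3) ≤ p * y :=
      mul_le_mul_of_nonneg_left hcube hp0.le
    have h3 : p * y = p - 4 / x := by
      rw [hydef, hudef]; field_simp
    linarith
  have hx4 : (0:ℝ) < x ^ 4 := by positivity
  have h5 : (1 - p + p * ((1:ℝ) - 12 / (p * x)) ^ ((1:ℝ)/3)) * x ^ 4 ≤ (1 - 4 / x) * x ^ 4 :=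
    mul_le_mul_of_nonneg_right h1 hx4.le
  have h6 : (1 - 4 / x) * x ^ 4 = x ^ 4 - 4 * x ^ 3 := by
    field_simp
  have h7 : x ^ 4 - 4 * x ^ 3 ≤ (x - 1) ^ 4 := by
    nlinarith [sq_nonneg (3 * x - 1)]
  calc (1 - p + p * ((1:ℝ) - 12 / (p * x)) ^ ((1:ℝ)/3)) * x ^ 4
      ≤ (1 - 4 / x) * x ^ 4 := h5
    _ = x ^ 4 - 4 * x ^ 3 := h6
    _ ≤ (x - 1) ^ 4 := h7
end

section
/- Fix probabilities p_s, p_1, …, p_n ∈ (0,1]. Suppose nonnegative sequences (X_{i,k})_{i∈[n]}, (Y_{i,k})_{i∈[n]}, (S_k) of reals satisfy, for all k: S_{k+1} ≤ (1-p_s)S_k + (p_s/n)Σ_i Y_{i,k}; Y_{i,k+1} ≤ (1-p_i)Y_{i,k} + p_i X_{i,k}; and X_{i,k+1} ≤ (1-p_i)X_{i,k} + p_i β S_k + p_i E, where β ∈ (0,1) and E ≥ 0. Define V_k = (1/n)Σ_i (X_{i,k} + Y_{i,k})/p_i + S_k/p_s. Then for all k, V_{k+1} ≤ V_k - (1 -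 β)S_k + E. -/
open Finset

/-- Lyapunov telescoping structure of the AREA convergence proof. -/
theorem lyapunov_telescoping (n : ℕ) (hn : 1 ≤ n)
    (p : Fin n → ℝ) (ps : ℝ)
    (hp : ∀ i, 0 < p i) (hp1 : ∀ i, p i ≤ 1) (hps : 0 < ps) (hps1 : ps ≤ 1)
    (X Y : Fin n → ℕ → ℝ) (S : ℕ → ℝ) (β E : ℝ)
    (hβ0 : 0 < β) (hβ1 : β < 1) (hE : 0 ≤ E)
    (hXnn : ∀ i k, 0 ≤ X i k) (hYnn : ∀ i k, 0 ≤ Y i k) (hSnn : ∀ k, 0 ≤ S k)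
    (hSrec : ∀ k, S (k + 1) ≤ (1 - ps) * S k + (ps / (n : ℝ)) * ∑ i, Y i k)
    (hYrec : ∀ i k, Y i (k + 1) ≤ (1 - p i) * Y i k + p i * X i k)
    (hXrec : ∀ i k, X i (k + 1) ≤ (1 - p i) * X i k + p i * β * S k + p i * E) :
    ∀ k,
      (1 / (n : ℝ)) * ∑ i, (X i (k + 1) + Y i (k + 1)) / p i + S (k + 1) / ps
        ≤ ((1 / (n : ℝ)) * ∑ i, (X i k + Y i k) / p i + S k / ps)
          - (1 - β) * S k + E := by
  intro k
  have hn0 : (0 : ℝ) < (n : ℝ) := by exact_mod_cast hn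
  have hn0' : ((n : ℝ)) ≠ 0 := ne_of_gt hn0
  -- per-coordinate bound
  have key : ∀ i, (X i (k + 1) + Y i (k + 1)) / p i
      ≤ (X i k + Y i k) / p i - Y i k + β * S k + E := by
    intro i
    have hpi := hp i
    have hrw : (X i k + Y i k) / p i - Y i k + β * S k + E
        = ((X i k + Y i k) + (-(Y i k) + β * S k + E) * p i) / p i := by
      field_simp
      ring
    rw [hrw]
    gcongr (?_ / p i)
    nlinarith [hXrec i k, hYrec i k]
  have hsum : (1 / (n : ℝ)) * ∑ i, (X i (k + 1) + Y i (k + 1)) / p i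
      ≤ (1 / (n : ℝ)) * ∑ i, (X i k + Y i k) / p i
        - (1 / (n : ℝ)) * ∑ i, Y i k + β * S k + E := by
    have h1 : ∑ i, (X i (k + 1) + Y i (k + 1)) / p i
        ≤ ∑ i, ((X i k + Y i k) / p i - Y i k + β * S k + E) :=
      Finset.sum_le_sum fun i _ => key i
    have h2 : ∑ i, ((X i k + Y i k) / p i - Y i k + β * S k + E)
        = ∑ i, (X i k + Y i k) / p i - ∑ i, Y i k + (n : ℝ) * (β * S k) + (n : ℝ) * E := by
      simp [Finset.sum_add_distrib, Finset.sum_sub_distrib, Finset.mul_sum, mul_comm]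
    have h3 := mul_le_mul_of_nonneg_left h1 (by positivity : (0:ℝ) ≤ 1 / (n : ℝ))
    rw [h2] at h3
    calc (1 / (n : ℝ)) * ∑ i, (X i (k + 1) + Y i (k + 1)) / p i
        ≤ (1 / (n : ℝ)) * (∑ i, (X i k + Y i k) / p i - ∑ i, Y i k
            + (n : ℝ) * (β * S k) + (n : ℝ) * E) := h3
      _ = (1 / (n : ℝ)) * ∑ i, (X i k + Y i k) / p i
            - (1 / (n : ℝ)) * ∑ i, Y i k + β * S k + E := by
          field_simp
  have hS : S (k + 1) / ps ≤ S k / ps - S k + (1 / (n : ℝ)) * ∑ i, Y i k := by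
    have hrw : S k / ps - S k + (1 / (n : ℝ)) * ∑ i, Y i k
        = ((1 - ps) * S k + (ps / (n : ℝ)) * ∑ i, Y i k) / ps := by
      field_simp
    rw [hrw]
    gcongr (?_ / ps)
    exact hSrec k
  linarith
end

section
/- Consider sequences defined by x_{i,k+1} = x_{i,k} + φ_{i,k+1}(G_{i,k} - x_{i,k}), y_{i,k+1} = y_{i,k} + φ_{i,k+1}(x_{i,k} - y_{i,k}), u_{k+1} = (Σ_i φ_{i,k+1})(u_k + (1/n)Σ_i φ_{i,k+1}(x_{i,k} - y_{i,k})) + φ_{s,k+1}·0, x_{s,k+1} = x_{s,k} + φ_{s,k+1}u_k, where at each step exactly one of φ_{1,k+1},…,φ_{n,k+1},φ_{s,k+1} equals 1 and the rest are 0, and initially u_0 = 0 and y_{i,0} = x_{s,0} for all i. Then for every k, x_{s,k} + u_k = (1/n)Σ_{i=1}^n y_{i,k}, i.e., the quantity z̄_k = x_{s,k} + u_k - ȳ_k is invariantly zero. -/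
/-!
Put `S = ∑ i, φ i (k+1)` and `D = ∑ i, φ i (k+1) • (x i k - y i k)`. One step adds `D / n` to `ȳ`,
and adds `φs • u + S • u + S • D / n = u + S • D / n` to `x_s + u` because `S + φs = 1`.
Finally `S • D = D`: either a client communicates and `S = 1`, or the server aggregates, and then
`S = 0` forces every `φ i (k+1)` to vanish, so `D = 0` as well.
-/

open Finset

theorem sum_smul_sum_smul_of_sum_add_eq_one {ι 𝕜 V : Type*} [Fintype ι] [Ring 𝕜] [PartialOrder 𝕜]
    [IsOrderedRing 𝕜] [AddCommMonoid V] [Module 𝕜 V] {φ : ι → 𝕜} {φs : 𝕜}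
    (hφ : ∀ i, 0 ≤ φ i) (hφs : φs = 0 ∨ φs = 1) (hone : ∑ i, φ i + φs = 1) (v : ι → V) :
    (∑ i, φ i) • ∑ i, φ i • v i = ∑ i, φ i • v i := by
  rcases hφs with rfl | rfl
  · rw [← add_zero (∑ i, φ i), hone, one_smul]
  · have hsum : ∑ i, φ i = 0 := add_eq_right.mp hone
    have hzero : ∀ i, φ i = 0 := fun i ↦
      (sum_eq_zero_iff_of_nonneg fun i _ ↦ hφ i).mp hsum i (mem_univ i)
    simp [hzero]

theorem one_div_card_smul_sum_const {ι 𝕜 V : Type*} [Fintype ι] [Nonempty ι] [DivisionRing 𝕜]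
    [CharZero 𝕜] [AddCommMonoid V] [Module 𝕜 V] (v : V) :
    (1 / (Fintype.card ι : 𝕜)) • ∑ _i : ι, v = v := by
  rw [sum_const, card_univ, ← Nat.cast_smul_eq_nsmul 𝕜, smul_smul, one_div,
    inv_mul_cancel₀ (Nat.cast_ne_zero.mpr Fintype.card_ne_zero), one_smul]

theorem area_conservation_general {d n : ℕ} (hn : 0 < n)
    (x y : Fin n → ℕ → EuclideanSpace ℝ (Fin d))
    (u xs : ℕ → EuclideanSpace ℝ (Fin d))
    (φ : Fin n → ℕ → ℝ) (φs : ℕ → ℝ)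
    (hφ01 : ∀ i k, φ i k = 0 ∨ φ i k = 1)
    (hφs01 : ∀ k, φs k = 0 ∨ φs k = 1)
    (hone : ∀ k, (∑ i, φ i k) + φs k = 1)
    (hy : ∀ i k, y i (k + 1) = y i k + φ i (k + 1) • (x i k - y i k))
    (hu : ∀ k, u (k + 1) =
      (∑ i, φ i (k + 1)) • (u k + ((1 : ℝ) / (n : ℝ)) • ∑ i, φ i (k + 1) • (x i k - y i k)))
    (hxs : ∀ k, xs (k + 1) = xs k + φs (k + 1) • u k)
    (hu0 : u 0 = 0)
    (hy0 : ∀ i, y i 0 = xs 0) :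
    ∀ k, xs k + u k = ((1 : ℝ) / (n : ℝ)) • ∑ i, y i k := by
  intro k
  induction k with
  | zero =>
    have : Nonempty (Fin n) := ⟨⟨0, hn⟩⟩
    simpa [hu0, hy0] using (one_div_card_smul_sum_const (𝕜 := ℝ) (ι := Fin n) (xs 0)).symm
  | succ k ih =>
    set S := ∑ i, φ i (k + 1)
    set D := ∑ i, φ i (k + 1) • (x i k - y i k)
    have hφ_nonneg : ∀ i, 0 ≤ φ i (k + 1) := fun i ↦ by
      rcases hφ01 i (k + 1) with h | h <;> simp [h]
    have hSD : S • D = D :=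
      sum_smul_sum_smul_of_sum_add_eq_one hφ_nonneg (hφs01 (k + 1)) (hone (k + 1)) _
    have hys : ∑ i, y i (k + 1) = ∑ i, y i k + D := by
      simp only [hy, sum_add_distrib, D]
    calc xs (k + 1) + u (k + 1)
        = xs k + (S + φs (k + 1)) • u k + ((1 : ℝ) / n) • S • D := by
          rw [hxs, hu, smul_add, add_smul, smul_comm S]
          abel
      _ = ((1 : ℝ) / n) • ∑ i, y i (k + 1) := by
          rw [hone, one_smul, hSD, ih, hys, smul_add]

/-- Conservation law of the AREA iterates: the aggregator satisfies
x_s + u = ȳ at every iteration. -/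
theorem area_conservation {d n : ℕ} (hn : 0 < n)
    (x y : Fin n → ℕ → EuclideanSpace ℝ (Fin d))
    (G : Fin n → ℕ → EuclideanSpace ℝ (Fin d))
    (u xs : ℕ → EuclideanSpace ℝ (Fin d))
    (φ : Fin n → ℕ → ℝ) (φs : ℕ → ℝ)
    (hφ01 : ∀ i k, φ i k = 0 ∨ φ i k = 1)
    (hφs01 : ∀ k, φs k = 0 ∨ φs k = 1)
    (hone : ∀ k, (∑ i, φ i k) + φs k = 1)
    (hx : ∀ i k, x i (k + 1) = x i k + φ i (k + 1) • (G i k - x i k))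
    (hy : ∀ i k, y i (k + 1) = y i k + φ i (k + 1) • (x i k - y i k))
    (hu : ∀ k, u (k + 1) =
      (∑ i, φ i (k + 1)) • (u k + ((1 : ℝ) / (n : ℝ)) • ∑ i, φ i (k + 1) • (x i k - y i k)))
    (hxs : ∀ k, xs (k + 1) = xs k + φs (k + 1) • u k)
    (hu0 : u 0 = 0)
    (hy0 : ∀ i, y i 0 = xs 0) :
    ∀ k, xs k + u k = ((1 : ℝ) / (n : ℝ)) • ∑ i, y i k :=
  area_conservation_general hn x y u xs φ φs hφ01 hφs01 hone hy hu hxs hu0 hy0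
end
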